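/- arXiv:1508.04852 — 3 statements merged into one kernel-verified Lean document; each statement's English description precedes it below -/
import Mathlib

section
/- Morphisms of configuration structures reflect causality: if π : C₁ → C₂ is a morphism, x ∈ C₁, e₁, e₂ ∈ x, and π(e₁) ≤_{π(x)} π(e₂) in C₂ (with both images defined), then e₁ ≤_x e₂ in C₁. -/
/-! Configuration structures (Winskel / van Glabbeek). -/

variable {E E₁ E₂ E₃ L : Type*}

/-- Finiteness axiom of configuration structures. -/
def Finiteness (C : Set (Set E)) : Prop :=
  ∀ x ∈ C, ∀ e ∈ x, ∃ z ∈ C, z.Finite ∧ e ∈ z ∧ z ⊆ x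

/-- Coincidence freeness axiom. -/
def CoincidenceFree (C : Set (Set E)) : Prop :=
  ∀ x ∈ C, ∀ e ∈ x, ∀ e' ∈ x, e ≠ e' → ∃ z ∈ C, z ⊆ x ∧ (e ∈ z ↔ e' ∉ z)

/-- Finite completeness: a family bounded above by a finite configuration has its union in C. -/
def FinComplete (C : Set (Set E)) : Prop :=
  ∀ X ⊆ C, (∃ y ∈ C, y.Finite ∧ ∀ x ∈ X, x ⊆ y) → ⋃₀ X ∈ C

/-- Stability axiom. -/
def Stability (C : Set (Set E)) : Prop :=
  ∀ x ∈ C, ∀ y ∈ C, x ∪ y ∈ C → x ∩ y ∈ C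

/-- `C` is (the configuration family of) a configuration structure. -/
def IsCS (C : Set (Set E)) : Prop :=
  Finiteness C ∧ CoincidenceFree C ∧ FinComplete C ∧ Stability C

/-- Causality order on a configuration `x`: `e₁ ≤ₓ e₂` iff every configuration
`z ⊆ x` containing `e₂` also contains `e₁`. -/
def causeLe (C : Set (Set E)) (x : Set E) (e₁ e₂ : E) : Prop :=
  ∀ z ∈ C, z ⊆ x → e₂ ∈ z → e₁ ∈ z

/-- Image of a set of events under a partial function (partial functions are
modelled as `Option`-valued functions, `none` meaning undefined). -/
def pimg (f : E₁ → Option E₂) (x : Set E₁) : Set E₂ :=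
  {e₂ | ∃ e₁ ∈ x, f e₁ = some e₂}

/-- A morphism of labelled configuration structures: a partial function that is
configuration preserving, locally injective and label preserving. -/
def IsMorphism (C₁ : Set (Set E₁)) (C₂ : Set (Set E₂)) (ℓ₁ : E₁ → L) (ℓ₂ : E₂ → L)
    (f : E₁ → Option E₂) : Prop :=
  (∀ x ∈ C₁, pimg f x ∈ C₂) ∧
  (∀ x ∈ C₁, ∀ e₁ ∈ x, ∀ e₂ ∈ x, ∀ e, f e₁ = some e → f e₂ = some e → e₁ = e₂) ∧
  (∀ x ∈ C₁, ∀ e ∈ x, ∀ e', f e = some e' → ℓ₁ e = ℓ₂ e')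

theorem pimg_mono (f : E₁ → Option E₂) {x y : Set E₁} (hxy : x ⊆ y) : pimg f x ⊆ pimg f y :=
  fun _ ⟨e, he, hfe⟩ => ⟨e, hxy he, hfe⟩

theorem mem_pimg {f : E₁ → Option E₂} {x : Set E₁} {e : E₁} {a : E₂} (he : e ∈ x)
    (ha : f e = some a) : a ∈ pimg f x :=
  ⟨e, he, ha⟩

namespace IsMorphism

variable {C₁ : Set (Set E₁)} {C₂ : Set (Set E₂)} {ℓ₁ : E₁ → L} {ℓ₂ : E₂ → L}
  {f : E₁ → Option E₂}

theorem pimg_mem (hf : IsMorphism C₁ C₂ ℓ₁ ℓ₂ f) {x : Set E₁} (hx : x ∈ C₁) : pimg f x ∈ C₂ :=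
  hf.1 x hx

theorem mem_of_mem_pimg (hf : IsMorphism C₁ C₂ ℓ₁ ℓ₂ f) {x z : Set E₁} (hx : x ∈ C₁)
    (hzx : z ⊆ x) {e : E₁} (he : e ∈ x) {a : E₂} (ha : f e = some a) (haz : a ∈ pimg f z) :
    e ∈ z := by
  obtain ⟨e', he'z, hfe'⟩ := haz
  rwa [hf.2.1 x hx e he e' (hzx he'z) a ha hfe']

end IsMorphism

theorem morphism_reflects_causality_general
    (C₁ : Set (Set E₁)) (C₂ : Set (Set E₂)) (ℓ₁ : E₁ → L) (ℓ₂ : E₂ → L)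
    (f : E₁ → Option E₂) (hf : IsMorphism C₁ C₂ ℓ₁ ℓ₂ f)
    (x : Set E₁) (hx : x ∈ C₁) (e₁ e₂ : E₁) (he₁ : e₁ ∈ x)
    (a₁ a₂ : E₂) (ha₁ : f e₁ = some a₁) (ha₂ : f e₂ = some a₂)
    (h : causeLe C₂ (pimg f x) a₁ a₂) :
    causeLe C₁ x e₁ e₂ := by
  intro z hz hzx he₂z
  have ha₁z : a₁ ∈ pimg f z := h _ (hf.pimg_mem hz) (pimg_mono f hzx) (mem_pimg he₂z ha₂)
  exact hf.mem_of_mem_pimg hx hzx he₁ ha₁ ha₁z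

/-- morphisms of configuration structures reflect causality. -/
theorem morphism_reflects_causality
    (C₁ : Set (Set E₁)) (C₂ : Set (Set E₂)) (ℓ₁ : E₁ → L) (ℓ₂ : E₂ → L)
    (hC₁ : IsCS C₁) (hC₂ : IsCS C₂)
    (f : E₁ → Option E₂) (hf : IsMorphism C₁ C₂ ℓ₁ ℓ₂ f)
    (x : Set E₁) (hx : x ∈ C₁) (e₁ e₂ : E₁) (he₁ : e₁ ∈ x) (he₂ : e₂ ∈ x)
    (a₁ a₂ : E₂) (ha₁ : f e₁ = some a₁) (ha₂ : f e₂ = some a₂)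
    (h : causeLe C₂ (pimg f x) a₁ a₂) :
    causeLe C₁ x e₁ e₂ :=
  morphism_reflects_causality_general C₁ C₂ ℓ₁ ℓ₂ f hf x hx e₁ e₂ he₁ a₁ a₂ ha₁ ha₂ h
end

section
/- The prefix operation preserves configuration structures: if ⟨E,C⟩ is a configuration structure with ∅ ∈ C and e ∉ E, then the structure with events {e} ∪ E and configurations {∅} ∪ { {e} ∪ x | x ∈ C } satisfies finiteness, coincidence freeness, finite completeness, and stability. -/
/-! Configuration structures (Winskel / van Glabbeek). -/

variable {E E₁ E₂ E₃ L : Type*}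

/-- Configurations of the prefix `α.C`: the fresh event is `none : Option E`;
configurations are `∅` together with `{e} ∪ x` for `x ∈ C`. -/
def prefixC (C : Set (Set E)) : Set (Set (Option E)) :=
  {∅} ∪ {y | ∃ x ∈ C, y = insert none (Option.some '' x)}

/-! The nonempty configurations of the prefix are the sets `{e} ∪ x` with `x ∈ C`, and
`x ↦ {e} ∪ x` preserves and reflects inclusion, unions, intersections and finiteness, so every
axiom transfers from `C`. The only new case is coincidence freeness for the fresh event `e`, which
is separated from every other event by the configuration `{e}`, available because `∅ ∈ C`. -/

def prefixConfig (x : Set E) : Set (Option E) :=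
  insert none (Option.some '' x)

@[simp]
lemma none_mem_prefixConfig (x : Set E) : none ∈ prefixConfig x :=
  Set.mem_insert _ _

@[simp]
lemma some_mem_prefixConfig {x : Set E} {a : E} : some a ∈ prefixConfig x ↔ a ∈ x := by
  simp [prefixConfig]

@[simp]
lemma prefixConfig_ne_empty (x : Set E) : prefixConfig x ≠ ∅ :=
  Set.nonempty_iff_ne_empty.mp ⟨none, none_mem_prefixConfig x⟩

@[simp]
lemma prefixConfig_subset_prefixConfig {x y : Set E} :
    prefixConfig x ⊆ prefixConfig y ↔ x ⊆ y := by
  refine ⟨fun h a ha => some_mem_prefixConfig.mp (h (some_mem_prefixConfig.mpr ha)), ?_⟩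
  rintro h (_ | a) ha
  · exact none_mem_prefixConfig y
  · exact some_mem_prefixConfig.mpr (h (some_mem_prefixConfig.mp ha))

lemma prefixConfig_injective : Function.Injective (prefixConfig (E := E)) := fun _ _ h =>
  (prefixConfig_subset_prefixConfig.mp h.le).antisymm (prefixConfig_subset_prefixConfig.mp h.ge)

lemma prefixConfig_union (x y : Set E) :
    prefixConfig (x ∪ y) = prefixConfig x ∪ prefixConfig y := by
  simp [prefixConfig, Set.image_union, Set.insert_union_distrib]

lemma prefixConfig_inter (x y : Set E) :
    prefixConfig (x ∩ y) = prefixConfig x ∩ prefixConfig y := by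
  simp [prefixConfig, Set.image_inter (Option.some_injective E), Set.insert_inter_distrib]

@[simp]
lemma prefixConfig_finite {x : Set E} : (prefixConfig x).Finite ↔ x.Finite := by
  simp [prefixConfig, Set.finite_image_iff (Option.some_injective E).injOn]

lemma sUnion_image_prefixConfig {S : Set (Set E)} (hS : S.Nonempty) :
    ⋃₀ (prefixConfig '' S) = prefixConfig (⋃₀ S) := by
  ext (_ | a)
  · simpa [Set.Nonempty] using hS
  · simp

lemma mem_prefixC {C : Set (Set E)} {y : Set (Option E)} :
    y ∈ prefixC C ↔ y = ∅ ∨ ∃ x ∈ C, prefixConfig x = y := by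
  simp [prefixC, prefixConfig, eq_comm]

@[simp]
lemma empty_mem_prefixC (C : Set (Set E)) : ∅ ∈ prefixC C :=
  mem_prefixC.mpr (.inl rfl)

@[simp]
lemma prefixConfig_mem_prefixC {C : Set (Set E)} {x : Set E} :
    prefixConfig x ∈ prefixC C ↔ x ∈ C := by
  simp [mem_prefixC, prefixConfig_injective.eq_iff]

section

variable {C : Set (Set E)}

lemma Finiteness.prefixC (hC : Finiteness C) (h0 : ∅ ∈ C) : Finiteness (prefixC C) := by
  intro y hy e he
  obtain rfl | ⟨x, hx, rfl⟩ := mem_prefixC.mp hy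
  · simp at he
  cases e with
  | none => exact ⟨prefixConfig ∅, by simpa using h0, by simp, by simp, by simp⟩
  | some a =>
    obtain ⟨z, hz, hzf, haz, hzx⟩ := hC x hx a (some_mem_prefixConfig.mp he)
    exact ⟨prefixConfig z, by simpa using hz, by simpa using hzf, by simpa using haz,
      prefixConfig_subset_prefixConfig.mpr hzx⟩

lemma CoincidenceFree.prefixC (hC : CoincidenceFree C) (h0 : ∅ ∈ C) :
    CoincidenceFree (prefixC C) := by
  intro y hy e he e' he' hne
  obtain rfl | ⟨x, hx, rfl⟩ := mem_prefixC.mp hy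
  · simp at he
  have hsep : prefixConfig ∅ ∈ _root_.prefixC C ∧ prefixConfig ∅ ⊆ prefixConfig x := by simpa
  cases e with
  | none =>
    cases e' with
    | none => exact absurd rfl hne
    | some b => exact ⟨_, hsep.1, hsep.2, by simp⟩
  | some a =>
    cases e' with
    | none => exact ⟨_, hsep.1, hsep.2, by simp⟩
    | some b =>
      obtain ⟨z, hz, hzx, hiff⟩ := hC x hx a (some_mem_prefixConfig.mp he) b
        (some_mem_prefixConfig.mp he') (Option.some_injective E |>.ne_iff.mp hne)
      exact ⟨prefixConfig z, by simpa using hz, prefixConfig_subset_prefixConfig.mpr hzx,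
        by simpa using hiff⟩

lemma FinComplete.prefixC (hC : FinComplete C) : FinComplete (prefixC C) := by
  rintro X hX ⟨y, hy, hyf, hbound⟩
  set X₀ := prefixConfig ⁻¹' X
  have hX₀ : X₀ ⊆ C := fun x hx => prefixConfig_mem_prefixC.mp (hX hx)
  -- the empty configuration contributes nothing to the union
  have hunion : ⋃₀ X = ⋃₀ (prefixConfig '' X₀) := by
    refine subset_antisymm (Set.sUnion_subset fun t ht => ?_) (Set.sUnion_subset_sUnion
      (Set.image_preimage_subset _ _))
    obtain rfl | ⟨x, -, rfl⟩ := mem_prefixC.mp (hX ht)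
    · exact Set.empty_subset _
    · exact Set.subset_sUnion_of_mem ⟨x, ht, rfl⟩
  obtain hX₀e | ⟨x₀, hx₀⟩ := X₀.eq_empty_or_nonempty
  · simp [hunion, hX₀e]
  obtain rfl | ⟨y₀, hy₀, rfl⟩ := mem_prefixC.mp hy
  · exact absurd (Set.subset_empty_iff.mp (hbound _ hx₀)) (prefixConfig_ne_empty x₀)
  rw [hunion, sUnion_image_prefixConfig ⟨x₀, hx₀⟩, prefixConfig_mem_prefixC]
  exact hC X₀ hX₀ ⟨y₀, hy₀, prefixConfig_finite.mp hyf,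
    fun x hx => prefixConfig_subset_prefixConfig.mp (hbound _ hx)⟩

lemma Stability.prefixC (hC : Stability C) : Stability (prefixC C) := by
  intro x hx y hy hxy
  obtain rfl | ⟨x₀, hx₀, rfl⟩ := mem_prefixC.mp hx
  · simp
  obtain rfl | ⟨y₀, hy₀, rfl⟩ := mem_prefixC.mp hy
  · simp
  rw [← prefixConfig_union, prefixConfig_mem_prefixC] at hxy
  rw [← prefixConfig_inter, prefixConfig_mem_prefixC]
  exact hC x₀ hx₀ y₀ hy₀ hxy

end

/-- the prefix operation preserves configuration structures. -/
theorem prefixC_isCS (C : Set (Set E)) (hC : IsCS C) (h0 : ∅ ∈ C) :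
    IsCS (prefixC C) :=
  ⟨hC.1.prefixC h0, hC.2.1.prefixC h0, hC.2.2.1.prefixC, hC.2.2.2.prefixC⟩
end

section
/- In a configuration structure, every finite configuration of cardinality n admits a covering chain from the empty configuration: there exist configurations ∅ = x₀ ⊂ x₁ ⊂ ⋯ ⊂ xₙ = x with |x_{i+1} \ x_i| = 1 for each i. -/
/-! Configuration structures (Winskel / van Glabbeek). -/

variable {E E₁ E₂ E₃ L : Type*}

/-!
Choose an event `e` of `x` that is maximal for the causality order `≤ₓ`; coincidence freeness makes
`≤ₓ` antisymmetric, so `e` is not below any other event `e'` of `x`, i.e. some subconfiguration of `x`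
contains `e'` but not `e`. The union of all these subconfigurations is `x \ {e}`, a configuration by
finite completeness. Removing events one at a time this way and reversing yields the chain.
-/

section Causality

variable {C : Set (Set E)} {x : Set E}

theorem causeLe_refl (e : E) : causeLe C x e e := fun _ _ _ h => h

theorem causeLe_trans {e₁ e₂ e₃ : E} (h₁₂ : causeLe C x e₁ e₂) (h₂₃ : causeLe C x e₂ e₃) :
    causeLe C x e₁ e₃ :=
  fun z hz hzx h => h₁₂ z hz hzx (h₂₃ z hz hzx h)

theorem CoincidenceFree.causeLe_antisymm (hCF : CoincidenceFree C) (hx : x ∈ C) {e e' : E}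
    (he : e ∈ x) (he' : e' ∈ x) (hle : causeLe C x e e') (hge : causeLe C x e' e) : e = e' := by
  by_contra hne
  obtain ⟨z, hz, hzx, hiff⟩ := hCF x hx e he e' he' hne
  by_cases hez : e ∈ z
  · exact hiff.mp hez (hge z hz hzx hez)
  · exact hez (hiff.mpr fun he'z => hez (hle z hz hzx he'z))

theorem CoincidenceFree.exists_causeLe_maximal (hCF : CoincidenceFree C) (hx : x ∈ C)
    (hfin : x.Finite) (hne : x.Nonempty) :
    ∃ e ∈ x, ∀ e' ∈ x, causeLe C x e e' → e' = e := by
  obtain ⟨e, he, hmax⟩ := hfin.exists_maximalFor (fun e => {b | causeLe C x b e}) x hne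
  refine ⟨e, he, fun e' he' hle => ?_⟩
  have hpast : {b | causeLe C x b e'} ⊆ {b | causeLe C x b e} :=
    hmax he' fun b hb => causeLe_trans hb hle
  exact hCF.causeLe_antisymm hx he' he (hpast (causeLe_refl e')) hle

end Causality

theorem FinComplete.diff_singleton_mem {C : Set (Set E)} (hFC : FinComplete C) {x : Set E}
    (hx : x ∈ C) (hfin : x.Finite) {e : E} (hmax : ∀ e' ∈ x, causeLe C x e e' → e' = e) :
    x \ {e} ∈ C := by
  have hunion : ⋃₀ {z | z ∈ C ∧ z ⊆ x ∧ e ∉ z} = x \ {e} := by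
    apply Set.Subset.antisymm
    · rintro b ⟨z, ⟨-, hzx, hez⟩, hbz⟩
      exact ⟨hzx hbz, by rintro rfl; exact hez hbz⟩
    · rintro b ⟨hbx, hbe : b ≠ e⟩
      have hnle : ¬ causeLe C x e b := fun hle => hbe (hmax b hbx hle)
      simp only [causeLe, not_forall] at hnle
      obtain ⟨z, hz, hzx, hbz, hez⟩ := hnle
      exact ⟨z, ⟨hz, hzx, hez⟩, hbz⟩
  rw [← hunion]
  exact hFC _ (fun z hz => hz.1) ⟨x, hx, hfin, fun z hz => hz.2.1⟩

theorem exists_diff_singleton_mem {C : Set (Set E)} (hCF : CoincidenceFree C)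
    (hFC : FinComplete C) {x : Set E} (hx : x ∈ C) (hfin : x.Finite) (hne : x.Nonempty) :
    ∃ e ∈ x, x \ {e} ∈ C := by
  obtain ⟨e, he, hmax⟩ := hCF.exists_causeLe_maximal hx hfin hne
  exact ⟨e, he, hFC.diff_singleton_mem hx hfin hmax⟩

def IsCoveringChain (C : Set (Set E)) (c : ℕ → Set E) (n : ℕ) : Prop :=
  (∀ i ≤ n, c i ∈ C) ∧ ∀ i < n, c i ⊂ c (i + 1) ∧ (c (i + 1) \ c i).ncard = 1

theorem IsCoveringChain.update_succ {C : Set (Set E)} {c : ℕ → Set E} {m : ℕ}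
    (hc : IsCoveringChain C c m) {x : Set E} (hx : x ∈ C) (hlt : c m ⊂ x)
    (hcard : (x \ c m).ncard = 1) :
    IsCoveringChain C (Function.update c (m + 1) x) (m + 1) := by
  have hlow : ∀ i ≤ m, Function.update c (m + 1) x i = c i := fun i hi =>
    Function.update_of_ne (by omega) _ _
  constructor
  · intro i hi
    rcases Nat.le_succ_iff.mp hi with hi | rfl
    · rw [hlow i hi]
      exact hc.1 i hi
    · rwa [Function.update_self]
  · intro i hi
    rcases Nat.lt_succ_iff_lt_or_eq.mp hi with hi | rfl
    · rw [hlow i hi.le, hlow (i + 1) hi]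
      exact hc.2 i hi
    · rw [hlow i le_rfl, Function.update_self]
      exact ⟨hlt, hcard⟩

theorem exists_isCoveringChain {C : Set (Set E)} (hCF : CoincidenceFree C) (hFC : FinComplete C)
    {x : Set E} (hx : x ∈ C) (hfin : x.Finite) {n : ℕ} (hn : x.ncard = n) :
    ∃ c : ℕ → Set E, c 0 = ∅ ∧ c n = x ∧ IsCoveringChain C c n := by
  induction n generalizing x with
  | zero =>
    obtain rfl : x = ∅ := (Set.ncard_eq_zero hfin).mp hn
    exact ⟨fun _ => ∅, rfl, rfl, fun _ _ => hx, fun i hi => absurd hi (Nat.not_lt_zero i)⟩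
  | succ m ih =>
    obtain ⟨e, he, hy⟩ :=
      exists_diff_singleton_mem hCF hFC hx hfin (Set.nonempty_of_ncard_ne_zero (by omega))
    have hycard : (x \ {e}).ncard = m := by
      rw [Set.ncard_sdiff_singleton_of_mem he, hn]; rfl
    obtain ⟨c, hc0, hcm, hchain⟩ := ih hy hfin.sdiff hycard
    have hlt : c m ⊂ x := hcm ▸ Set.sdiff_singleton_ssubset.mpr he
    have hstep : (x \ c m).ncard = 1 := by
      rw [hcm, Set.sdiff_sdiff_right_self, Set.inter_comm, Set.singleton_inter_of_mem he,
        Set.ncard_singleton]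
    exact ⟨_, by simpa using hc0, Function.update_self .., hchain.update_succ hx hlt hstep⟩

theorem covering_chain_general (C : Set (Set E)) (hC : IsCS C)
    (x : Set E) (hx : x ∈ C) (hfin : x.Finite) (n : ℕ) (hn : x.ncard = n) :
    ∃ c : ℕ → Set E, c 0 = ∅ ∧ c n = x ∧
      (∀ i ≤ n, c i ∈ C) ∧
      (∀ i < n, c i ⊂ c (i + 1) ∧ (c (i + 1) \ c i).ncard = 1) := by
  obtain ⟨-, hCF, hFC, -⟩ := hC
  exact exists_isCoveringChain hCF hFC hx hfin hn

/-- every finite configuration of cardinality `n` is reachable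
from `∅` by a covering chain of configurations adding one event at a time. -/
theorem covering_chain (C : Set (Set E)) (hC : IsCS C) (h0 : ∅ ∈ C)
    (x : Set E) (hx : x ∈ C) (hfin : x.Finite) (n : ℕ) (hn : x.ncard = n) :
    ∃ c : ℕ → Set E, c 0 = ∅ ∧ c n = x ∧
      (∀ i ≤ n, c i ∈ C) ∧
      (∀ i < n, c i ⊂ c (i + 1) ∧ (c (i + 1) \ c i).ncard = 1) :=
  covering_chain_general C hC x hx hfin n hn
end
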